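/- arXiv:1909.07481 — 2 statements merged into one kernel-verified Lean document; each statement's English description precedes it below -/
import Mathlib

section
/- Let K ≥ 2, let V_1, …, V_K ∈ ℝ, and let ε_1, …, ε_K be independent random variables each distributed according to the standard Gumbel distribution. Then for every k ∈ {1, …, K}, the probability that V_k + ε_k > V_j + ε_j for all j ≠ k equals exp(V_k) / ∑_{j=1}^K exp(V_j), i.e., the choice probability takes the form of the softmax function. (Proposition 1.) -/
open MeasureTheory ProbabilityTheory Real

/-- The standard Gumbel distribution: the probability measure on `ℝ` with density
`x ↦ exp (-x) * exp (-exp (-x))` with respect to Lebesgue measure (its CDF is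
`x ↦ exp (-exp (-x))`). -/
noncomputable def stdGumbel : Measure ℝ :=
  MeasureTheory.volume.withDensity
    (fun x => ENNReal.ofReal (Real.exp (-x) * Real.exp (-Real.exp (-x))))

/-! Conditionally on `ε k = t`, alternative `k` wins iff `ε j < t - (V j - V k)` for all `j ≠ k`;
by independence this has probability `∏ j, F (t - (V j - V k)) = exp (-A * exp (-t))`, where
`F x = exp (-exp (-x))` is the Gumbel CDF and `A = ∑ j ≠ k, exp (V j - V k)`. Since `exp (-ε k)` is
standard exponential, averaging over `t` gives `E[exp (-A * exp (-ε k))] = 1 / (1 + A)`, which is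
the softmax probability. -/

open Set

lemma measurableSet_setOf_forall_add_lt {ι : Type*} [Countable ι] (V : ι → ℝ) (k : ι) :
    MeasurableSet {x : ι → ℝ | ∀ j, j ≠ k → V k + x k > V j + x j} := by
  simp only [ofPred_forall]
  exact .iInter fun j ↦ .iInter fun _ ↦ measurableSet_lt (by fun_prop) (by fun_prop)

theorem measure_pi_setOf_forall_add_lt {n : ℕ} (μ : Measure ℝ) [SigmaFinite μ]
    (V : Fin (n + 1) → ℝ) (k : Fin (n + 1)) :
    Measure.pi (fun _ ↦ μ) {x | ∀ j, j ≠ k → V k + x k > V j + x j}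
      = ∫⁻ t, ∏ j : Fin n, μ (Iio (t - (V (k.succAbove j) - V k))) ∂μ := by
  set S := {x : Fin (n + 1) → ℝ | ∀ j, j ≠ k → V k + x k > V j + x j}
  set e := MeasurableEquiv.piFinSuccAbove (fun _ : Fin (n + 1) ↦ ℝ) k
  have hpre : e.symm ⁻¹' S = {q | ∀ j, q.2 j < q.1 - (V (k.succAbove j) - V k)} := by
    ext ⟨t, y⟩
    simp only [S, e, MeasurableEquiv.piFinSuccAbove_symm_apply, Fin.insertNthEquiv_apply,
      mem_preimage, mem_ofPred_eq, Fin.forall_iff_succAbove k, Fin.insertNth_apply_same,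
      Fin.insertNth_apply_succAbove, ne_eq, not_true_eq_false, IsEmpty.forall_iff, true_and,
      Fin.succAbove_ne, not_false_eq_true, forall_const]
    exact forall_congr' fun j ↦ by constructor <;> intro h <;> linarith
  have hT : MeasurableSet (e.symm ⁻¹' S) :=
    (measurableSet_setOf_forall_add_lt V k).preimage e.symm.measurable
  rw [← (measurePreserving_piFinSuccAbove (fun _ ↦ μ) k).symm.measure_preimage_equiv,
    Measure.prod_apply hT]
  refine lintegral_congr fun t ↦ ?_
  rw [← Measure.pi_pi]
  congr 1
  ext y
  simp [hpre]

lemma lintegral_Ioi_exp_neg_mul {r : ℝ} (hr : 0 < r) (c : ℝ) :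
    ∫⁻ u in Ioi c, ENNReal.ofReal (exp (-(r * u))) = ENNReal.ofReal (exp (-(r * c)) / r) := by
  simp_rw [← neg_mul]
  rw [← ofReal_integral_eq_lintegral_ofReal (integrableOn_exp_mul_Ioi (neg_lt_zero.2 hr) c)
    (.of_forall fun _ ↦ (exp_pos _).le), integral_exp_mul_Ioi (neg_lt_zero.2 hr), div_neg,
    neg_div, neg_neg]

lemma map_exp_neg_stdGumbel :
    stdGumbel.map (fun x ↦ exp (-x))
      = (volume.restrict (Ioi 0)).withDensity fun u ↦ ENNReal.ofReal (exp (-u)) := by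
  ext s hs
  have hrange : range (fun x : ℝ ↦ exp (-x)) = Ioi 0 :=
    (neg_surjective.range_comp exp).trans range_exp
  have hs' : MeasurableSet ((fun x : ℝ ↦ exp (-x)) ⁻¹' s) := hs.preimage (by fun_prop)
  rw [Measure.map_apply (by fun_prop) hs, withDensity_apply _ hs, Measure.restrict_restrict hs,
    ← hrange, ← image_preimage_eq_inter_range, stdGumbel, withDensity_apply _ hs',
    lintegral_image_eq_lintegral_deriv_mul_of_antitoneOn hs'
      (fun x _ ↦ (hasDerivAt_neg x).exp.hasDerivWithinAt)
      (fun x _ y _ hxy ↦ exp_le_exp.2 (neg_le_neg hxy))]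
  refine setLIntegral_congr_fun hs' fun x _ ↦ ?_
  rw [mul_neg_one, neg_neg, ENNReal.ofReal_mul (exp_pos _).le]

instance isProbabilityMeasure_stdGumbel : IsProbabilityMeasure stdGumbel := by
  constructor
  rw [← preimage_univ (f := fun x : ℝ ↦ exp (-x)), ← Measure.map_apply (by fun_prop) .univ,
    map_exp_neg_stdGumbel, withDensity_apply _ .univ, Measure.restrict_univ]
  simpa using lintegral_Ioi_exp_neg_mul one_pos 0

lemma stdGumbel_Iio (b : ℝ) : stdGumbel (Iio b) = ENNReal.ofReal (exp (-exp (-b))) := by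
  have : Iio b = (fun x ↦ exp (-x)) ⁻¹' Ioi (exp (-b)) := by ext; simp
  rw [this, ← Measure.map_apply (by fun_prop) measurableSet_Ioi, map_exp_neg_stdGumbel,
    withDensity_apply _ measurableSet_Ioi, Measure.restrict_restrict measurableSet_Ioi,
    Ioi_inter_Ioi, sup_of_le_left (exp_pos _).le]
  simpa using lintegral_Ioi_exp_neg_mul one_pos (exp (-b))

lemma prod_stdGumbel_Iio_sub {ι : Type*} [Fintype ι] (t : ℝ) (W : ι → ℝ) :
    ∏ i, stdGumbel (Iio (t - W i)) = ENNReal.ofReal (exp (-((∑ i, exp (W i)) * exp (-t)))) := by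
  simp_rw [stdGumbel_Iio]
  rw [← ENNReal.ofReal_prod_of_nonneg fun _ _ ↦ (exp_pos _).le, ← exp_sum, Finset.sum_mul,
    ← Finset.sum_neg_distrib]
  congr 3 with i
  rw [← exp_add]
  ring_nf

lemma lintegral_exp_neg_mul_exp_neg_stdGumbel {A : ℝ} (hA : -1 < A) :
    ∫⁻ t, ENNReal.ofReal (exp (-(A * exp (-t)))) ∂stdGumbel = ENNReal.ofReal (1 + A)⁻¹ := by
  rw [← lintegral_map (f := fun u ↦ ENNReal.ofReal (exp (-(A * u)))) (by fun_prop) (by fun_prop),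
    map_exp_neg_stdGumbel, lintegral_withDensity_eq_lintegral_mul _ (by fun_prop) (by fun_prop)]
  simp only [Pi.mul_apply, ← ENNReal.ofReal_mul (exp_pos _).le, ← exp_add, ← neg_add,
    ← one_add_mul]
  rw [lintegral_Ioi_exp_neg_mul (by linarith) 0, mul_zero, neg_zero, exp_zero, one_div]

lemma div_sum_exp_eq_inv_one_add {n : ℕ} (V : Fin (n + 1) → ℝ) (k : Fin (n + 1)) :
    exp (V k) / ∑ j, exp (V j) = (1 + ∑ j : Fin n, exp (V (k.succAbove j) - V k))⁻¹ := by
  have : 1 + ∑ j : Fin n, exp (V (k.succAbove j) - V k) = (∑ j, exp (V j)) / exp (V k) := by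
    rw [Finset.sum_div, Fin.sum_univ_succAbove _ k, div_self (exp_pos _).ne']
    simp_rw [exp_sub]
  rw [this, inv_div]

theorem choice_probability_softmax_of_gumbel_general
    {Ω : Type*} [MeasurableSpace Ω] (Pr : Measure Ω)
    (K : ℕ) (V : Fin K → ℝ) (ε : Fin K → Ω → ℝ)
    (hmeas : ∀ i, Measurable (ε i))
    (hindep : iIndepFun ε Pr)
    (hlaw : ∀ i, Measure.map (ε i) Pr = stdGumbel)
    (k : Fin K) :
    Pr {ω | ∀ j, j ≠ k → V k + ε k ω > V j + ε j ω}
      = ENNReal.ofReal (Real.exp (V k) / ∑ j, Real.exp (V j)) := by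
  obtain ⟨n, rfl⟩ := Nat.exists_eq_add_one.2 k.pos
  have hjoint : Pr.map (fun ω i ↦ ε i ω) = Measure.pi fun _ ↦ stdGumbel := by
    simpa only [hlaw] using hindep.map_fun_eq_pi_map fun i ↦ (hmeas i).aemeasurable
  have hA : -1 < ∑ j : Fin n, exp (V (k.succAbove j) - V k) :=
    neg_one_lt_zero.trans_le (Finset.sum_nonneg fun _ _ ↦ (exp_pos _).le)
  calc Pr {ω | ∀ j, j ≠ k → V k + ε k ω > V j + ε j ω}
      = Measure.pi (fun _ ↦ stdGumbel) {x | ∀ j, j ≠ k → V k + x k > V j + x j} := by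
        rw [← hjoint, Measure.map_apply (measurable_pi_lambda _ hmeas)
          (measurableSet_setOf_forall_add_lt V k)]
        rfl
    _ = ∫⁻ t, ENNReal.ofReal (exp (-((∑ j : Fin n, exp (V (k.succAbove j) - V k)) * exp (-t))))
          ∂stdGumbel := by
        simp_rw [measure_pi_setOf_forall_add_lt, prod_stdGumbel_Iio_sub]
    _ = ENNReal.ofReal (exp (V k) / ∑ j, exp (V j)) := by
        rw [lintegral_exp_neg_mul_exp_neg_stdGumbel hA, div_sum_exp_eq_inv_one_add]

/-- **Proposition 1.** If `ε 1, …, ε K` are independent standard Gumbel random variables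
and `V 1, …, V K` are real numbers, then the probability that alternative `k` attains the
strictly largest utility `V j + ε j` equals the softmax probability
`exp (V k) / ∑ j, exp (V j)`. -/
theorem choice_probability_softmax_of_gumbel
    {Ω : Type*} [MeasurableSpace Ω] (Pr : Measure Ω) [IsProbabilityMeasure Pr]
    (K : ℕ) (hK : 2 ≤ K) (V : Fin K → ℝ) (ε : Fin K → Ω → ℝ)
    (hmeas : ∀ i, Measurable (ε i))
    (hindep : iIndepFun ε Pr)
    (hlaw : ∀ i, Measure.map (ε i) Pr = stdGumbel)
    (k : Fin K) :
    Pr {ω | ∀ j, j ≠ k → V k + ε k ω > V j + ε j ω}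
      = ENNReal.ofReal (Real.exp (V k) / ∑ j, Real.exp (V j)) :=
  choice_probability_softmax_of_gumbel_general Pr K V ε hmeas hindep hlaw k
end

section
/- Let F : ℝ → [0,1] be nondecreasing and right-continuous, suppose F(0) = exp(−α) for some real α > 0, and suppose that F(V − log T) = F(V)^T for every V ∈ ℝ and every positive integer T. Then F(x) = exp(−α·exp(−x)) for every x ∈ ℝ, i.e., F is the CDF of a (scaled) Gumbel distribution. (Functional-equation step concluding the proof of Proposition 2.) -/
/-!
Taking `V = log T` gives `F (log T) ^ T = F 0 = exp (-α)`, so `F (log T) = exp (-α / T)`; a second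
application with `V = log p`, `T = q` gives `F (log (p / q)) = exp (-α q / p)`. Thus `F` agrees
with the Gumbel CDF on the logarithms of positive rationals, which are dense, and
right-continuity does the rest. Taking `T`-th roots needs `F ≥ 0`, which follows from
`F x = F (x + log 2) ^ 2`.
-/

open Real Filter Set Topology

theorem eq_of_continuousWithinAt_Ici_of_eqOn_dense {α β : Type*} [TopologicalSpace α]
    [LinearOrder α] [OrderTopology α] [DenselyOrdered α] [NoMaxOrder α]
    [TopologicalSpace β] [T2Space β] {f g : α → β} {s : Set α} (hs : Dense s)
    (hfg : EqOn f g s) {x : α} (hf : ContinuousWithinAt f (Ici x) x)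
    (hg : ContinuousWithinAt g (Ici x) x) : f x = g x := by
  have hx : x ∈ closure (Ioi x ∩ s) := by
    have := closure_mono (hs.open_subset_closure_inter isOpen_Ioi (t := Ioi x))
    rw [closure_closure, closure_Ioi] at this
    exact this le_rfl
  have := mem_closure_iff_nhdsWithin_neBot.mp hx
  have hsub : Ioi x ∩ s ⊆ Ici x := inter_subset_left.trans Ioi_subset_Ici_self
  refine tendsto_nhds_unique ((hf.mono hsub).tendsto.congr' ?_) (hg.mono hsub).tendsto
  exact eventually_nhdsWithin_of_forall fun y hy => hfg hy.2

theorem dense_setOf_log_ratCast : Dense {y : ℝ | ∃ q : ℚ, 0 < q ∧ log q = y} := by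
  refine dense_of_exists_between fun a b hab => ?_
  obtain ⟨q, haq, hqb⟩ := exists_rat_btwn (exp_lt_exp.mpr hab)
  have hq : (0 : ℝ) < q := (exp_pos a).trans haq
  refine ⟨log q, ⟨q, by exact_mod_cast hq, rfl⟩, ?_, ?_⟩
  · simpa using log_lt_log (exp_pos a) haq
  · simpa using log_lt_log hq hqb

/-- The maximum of `T` i.i.d. samples of the law with CDF `F` has the law of one sample
shifted by `log T`. -/
def IsMaxStable (F : ℝ → ℝ) : Prop :=
  ∀ (V : ℝ) (T : ℕ), 0 < T → F (V - log T) = F V ^ T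

namespace IsMaxStable

variable {F : ℝ → ℝ}

theorem nonneg (hF : IsMaxStable F) (x : ℝ) : 0 ≤ F x := by
  have h := hF (x + log 2) 2 two_pos
  rw [Nat.cast_ofNat, add_sub_cancel_right] at h
  exact h ▸ sq_nonneg _

theorem apply_log_natCast (hF : IsMaxStable F) {α : ℝ} (hF0 : F 0 = exp (-α))
    {n : ℕ} (hn : 0 < n) : F (log n) = exp (-α / n) := by
  have h := hF (log n) n hn
  rw [sub_self, hF0] at h
  refine (pow_left_inj₀ (hF.nonneg _) (exp_pos _).le hn.ne').mp ?_
  rw [← h, ← exp_nat_mul]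
  congr 1
  field_simp

theorem apply_log_ratCast (hF : IsMaxStable F) {α : ℝ} (hF0 : F 0 = exp (-α))
    {q : ℚ} (hq : 0 < q) : F (log q) = exp (-α / q) := by
  have hnum : 0 < q.num := Rat.num_pos.mpr hq
  have hn : 0 < q.num.toNat := by omega
  have hq_eq : (q : ℝ) = (q.num.toNat : ℝ) / q.den := by
    rw [Rat.cast_def]
    congr 1
    exact_mod_cast (Int.toNat_of_nonneg hnum.le).symm
  have hn' : (0 : ℝ) < q.num.toNat := by exact_mod_cast hn
  have hd' : (0 : ℝ) < q.den := by exact_mod_cast q.pos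
  rw [hq_eq, log_div hn'.ne' hd'.ne', hF _ _ q.pos, hF.apply_log_natCast hF0 hn,
    ← exp_nat_mul]
  congr 1
  field_simp

end IsMaxStable

theorem gumbel_functional_equation_solution_general
    (F : ℝ → ℝ)
    (hrc : ∀ x, ContinuousWithinAt F (Set.Ici x) x)
    (α : ℝ) (hF0 : F 0 = Real.exp (-α))
    (hfe : ∀ (V : ℝ) (T : ℕ), 0 < T → F (V - Real.log T) = F V ^ T) :
    ∀ x : ℝ, F x = Real.exp (-α * Real.exp (-x)) := by
  intro x
  refine eq_of_continuousWithinAt_Ici_of_eqOn_dense dense_setOf_log_ratCast ?_ (hrc x)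
    (by fun_prop : Continuous fun x => exp (-α * exp (-x))).continuousWithinAt
  rintro _ ⟨q, hq, rfl⟩
  have hq' : (0 : ℝ) < q := by exact_mod_cast hq
  simp only [IsMaxStable.apply_log_ratCast hfe hF0 hq, exp_neg, exp_log hq', div_eq_mul_inv]

/-- **Functional-equation step concluding the proof of Proposition 2.**
Let `F : ℝ → [0,1]` be nondecreasing and right-continuous with `F 0 = exp (-α)` for some
`α > 0`, and suppose `F (V - log T) = (F V) ^ T` for every `V ∈ ℝ` and every positive
integer `T`.  Then `F x = exp (-α * exp (-x))` for every `x ∈ ℝ`, i.e. `F` is the CDF of a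
(scaled) Gumbel distribution. -/
theorem gumbel_functional_equation_solution
    (F : ℝ → ℝ) (hF01 : ∀ x, F x ∈ Set.Icc (0 : ℝ) 1)
    (hmono : Monotone F)
    (hrc : ∀ x, ContinuousWithinAt F (Set.Ici x) x)
    (α : ℝ) (hα : 0 < α) (hF0 : F 0 = Real.exp (-α))
    (hfe : ∀ (V : ℝ) (T : ℕ), 0 < T → F (V - Real.log T) = F V ^ T) :
    ∀ x : ℝ, F x = Real.exp (-α * Real.exp (-x)) :=
  gumbel_functional_equation_solution_general F hrc α hF0 hfe
end
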